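/- In any equilibrium (ξ, S) of the discrete single-period Kyle game, for total demands y₁, y₂ with positive realisation probability and y₂ ≥ y₁ + 2, one has S(y₁) ≤ S(y₂). -/

import Mathlib

open Finset

/-- Average execution price `∫ S(x+z) ζ(dz)` for an insider order of size `x`. -/
noncomputable def avgPrice (EZ : Finset ℝ) (ζ : ℝ → ℝ) (S : ℝ → ℝ) (x : ℝ) : ℝ :=
  ∑ z ∈ EZ, ζ z * S (x + z)

/-- The insider's expected gain from order `x` when the true value is `v`. -/
noncomputable def gain (EZ : Finset ℝ) (ζ : ℝ → ℝ) (S : ℝ → ℝ) (v x : ℝ) : ℝ :=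
  x * (v - avgPrice EZ ζ S x)

/-- Probability that the total demand equals `y`. -/
noncomputable def pY (EV EX EZ : Finset ℝ) (ν ζ : ℝ → ℝ) (ξ : ℝ → ℝ → ℝ) (y : ℝ) : ℝ :=
  ∑ v ∈ EV, ∑ x ∈ EX, ∑ z ∈ EZ, if x + z = y then ν v * ξ v x * ζ z else 0

/-- Joint expectation of the true value on the event that total demand is `y`. -/
noncomputable def pYV (EV EX EZ : Finset ℝ) (ν ζ : ℝ → ℝ) (ξ : ℝ → ℝ → ℝ) (y : ℝ) : ℝ :=
  ∑ v ∈ EV, ∑ x ∈ EX, ∑ z ∈ EZ, if x + z = y then ν v * ξ v x * ζ z * v else 0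

/-- `ξ` is a behaviour strategy: `ξ(v,·)` is a probability vector on `E_X`. -/
def IsStrategy (EV EX : Finset ℝ) (ξ : ℝ → ℝ → ℝ) : Prop :=
  ∀ v ∈ EV, (∀ x ∈ EX, 0 ≤ ξ v x) ∧ ∑ x ∈ EX, ξ v x = 1

/-- Kyle equilibrium of the single-period discrete game: `ξ(v,·)` is supported on
maximisers of the gain given `S`, and `S` satisfies rational pricing given `ξ`
at every total demand with positive probability. -/
def IsKyleEquilibrium (EV EX EZ : Finset ℝ) (ν ζ : ℝ → ℝ)
    (ξ : ℝ → ℝ → ℝ) (S : ℝ → ℝ) : Prop :=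
  IsStrategy EV EX ξ ∧
  (∀ v ∈ EV, ∀ x ∈ EX, 0 < ξ v x → ∀ x' ∈ EX, gain EZ ζ S v x' ≤ gain EZ ζ S v x) ∧
  (∀ y : ℝ, 0 < pY EV EX EZ ν ζ ξ y →
    S y * pY EV EX EZ ν ζ ξ y = pYV EV EX EZ ν ζ ξ y)

/-!
Comparing the gains of two types at each other's orders shows that best responses are
single-crossing: a strictly larger order is only ever played by a weakly larger value. Hence the
mean value among the types placing order `x` is nondecreasing in `x`. Since the noise lies in
`[-1, 1]`, every order compatible with total demand `y₁` is at most every order compatible with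
`y₂ ≥ y₁ + 2`, and rational pricing turns this into `S y₁ ≤ S y₂`.
-/

/-- The `p`-average of `B / A` is at most its `q`-average when `B / A` is smaller at every point
charged by `p` than at every point charged by `q` (cleared of denominators). -/
theorem sum_mul_sum_le_sum_mul_sum_of_cross {ι : Type*} (s : Finset ι) {p q A B : ι → ℝ}
    (hp : ∀ i ∈ s, 0 ≤ p i) (hq : ∀ i ∈ s, 0 ≤ q i)
    (hcross : ∀ i ∈ s, ∀ j ∈ s, 0 < p i → 0 < q j → B i * A j ≤ A i * B j) :
    (∑ i ∈ s, p i * B i) * ∑ j ∈ s, q j * A j ≤ (∑ i ∈ s, p i * A i) * ∑ j ∈ s, q j * B j := by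
  rw [sum_mul_sum, sum_mul_sum]
  refine sum_le_sum fun i hi => sum_le_sum fun j hj => ?_
  rcases (hp i hi).eq_or_lt with hpi | hpi
  · simp [← hpi]
  rcases (hq j hj).eq_or_lt with hqj | hqj
  · simp [← hqj]
  calc p i * B i * (q j * A j) = p i * q j * (B i * A j) := by ring
    _ ≤ p i * q j * (A i * B j) :=
      mul_le_mul_of_nonneg_left (hcross i hi j hj hpi hqj) (mul_pos hpi hqj).le
    _ = p i * A i * (q j * B j) := by ring

theorem le_of_gain_le_of_gain_le {EZ : Finset ℝ} {ζ S : ℝ → ℝ} {v v' x x' : ℝ}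
    (h : gain EZ ζ S v x' ≤ gain EZ ζ S v x) (h' : gain EZ ζ S v' x ≤ gain EZ ζ S v' x')
    (hlt : x < x') : v ≤ v' := by
  simp only [gain] at h h'
  nlinarith

noncomputable def orderMass (EV : Finset ℝ) (ν : ℝ → ℝ) (ξ : ℝ → ℝ → ℝ) (x : ℝ) : ℝ :=
  ∑ v ∈ EV, ν v * ξ v x

noncomputable def orderValueMass (EV : Finset ℝ) (ν : ℝ → ℝ) (ξ : ℝ → ℝ → ℝ) (x : ℝ) : ℝ :=
  ∑ v ∈ EV, ν v * ξ v x * v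

theorem pY_eq_sum_product (EV EX EZ : Finset ℝ) (ν ζ : ℝ → ℝ) (ξ : ℝ → ℝ → ℝ) (y : ℝ) :
    pY EV EX EZ ν ζ ξ y =
      ∑ xz ∈ EX ×ˢ EZ, (if xz.1 + xz.2 = y then ζ xz.2 else 0) * orderMass EV ν ξ xz.1 := by
  simp only [pY, orderMass, sum_product, mul_sum]
  rw [sum_comm]
  refine sum_congr rfl fun x _ => ?_
  rw [sum_comm]
  refine sum_congr rfl fun z _ => sum_congr rfl fun v _ => ?_
  split_ifs <;> ring

theorem pYV_eq_sum_product (EV EX EZ : Finset ℝ) (ν ζ : ℝ → ℝ) (ξ : ℝ → ℝ → ℝ) (y : ℝ) :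
    pYV EV EX EZ ν ζ ξ y =
      ∑ xz ∈ EX ×ˢ EZ, (if xz.1 + xz.2 = y then ζ xz.2 else 0) * orderValueMass EV ν ξ xz.1 := by
  simp only [pYV, orderValueMass, sum_product, mul_sum]
  rw [sum_comm]
  refine sum_congr rfl fun x _ => ?_
  rw [sum_comm]
  refine sum_congr rfl fun z _ => sum_congr rfl fun v _ => ?_
  split_ifs <;> ring

namespace IsKyleEquilibrium

variable {EV EX EZ : Finset ℝ} {ν ζ : ℝ → ℝ} {ξ : ℝ → ℝ → ℝ} {S : ℝ → ℝ}

theorem le_of_order_lt (heq : IsKyleEquilibrium EV EX EZ ν ζ ξ S) {v v' x x' : ℝ}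
    (hv : v ∈ EV) (hv' : v' ∈ EV) (hx : x ∈ EX) (hx' : x' ∈ EX)
    (hξ : 0 < ξ v x) (hξ' : 0 < ξ v' x') (hlt : x < x') : v ≤ v' :=
  le_of_gain_le_of_gain_le (heq.2.1 v hv x hx hξ x' hx') (heq.2.1 v' hv' x' hx' hξ' x hx) hlt

theorem orderValueMass_mul_orderMass_le (heq : IsKyleEquilibrium EV EX EZ ν ζ ξ S)
    (hν : ∀ v ∈ EV, 0 ≤ ν v) {x x' : ℝ} (hx : x ∈ EX) (hx' : x' ∈ EX) (hle : x ≤ x') :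
    orderValueMass EV ν ξ x * orderMass EV ν ξ x' ≤
      orderMass EV ν ξ x * orderValueMass EV ν ξ x' := by
  rcases hle.eq_or_lt with rfl | hlt
  · exact (mul_comm _ _).le
  have hξ : ∀ x ∈ EX, ∀ v ∈ EV, 0 ≤ ν v * ξ v x := fun x hx v hv =>
    mul_nonneg (hν v hv) ((heq.1 v hv).1 x hx)
  have := sum_mul_sum_le_sum_mul_sum_of_cross EV (A := fun _ => 1) (B := id)
    (hξ x hx) (hξ x' hx') fun v hv v' hv' hpos hpos' => by
      simpa using heq.le_of_order_lt hv hv' hx hx' (pos_of_mul_pos_right hpos (hν v hv))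
        (pos_of_mul_pos_right hpos' (hν v' hv')) hlt
  simpa only [orderMass, orderValueMass, mul_one, id] using this

theorem pYV_mul_pY_le (heq : IsKyleEquilibrium EV EX EZ ν ζ ξ S)
    (hν : ∀ v ∈ EV, 0 ≤ ν v) (hζ : ∀ z ∈ EZ, 0 ≤ ζ z) (hZsub : ∀ z ∈ EZ, -1 ≤ z ∧ z ≤ 1)
    {y₁ y₂ : ℝ} (hgap : y₁ + 2 ≤ y₂) :
    pYV EV EX EZ ν ζ ξ y₁ * pY EV EX EZ ν ζ ξ y₂ ≤
      pY EV EX EZ ν ζ ξ y₁ * pYV EV EX EZ ν ζ ξ y₂ := by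
  have hw : ∀ y, ∀ xz ∈ EX ×ˢ EZ, 0 ≤ if xz.1 + xz.2 = y then ζ xz.2 else 0 := fun y xz hxz => by
    split_ifs
    exacts [hζ _ (mem_product.1 hxz).2, le_rfl]
  rw [pY_eq_sum_product, pY_eq_sum_product, pYV_eq_sum_product, pYV_eq_sum_product]
  refine sum_mul_sum_le_sum_mul_sum_of_cross _ (hw y₁) (hw y₂) ?_
  rintro ⟨x, z⟩ hxz ⟨x', z'⟩ hxz' hpos hpos'
  obtain ⟨hx, hz⟩ := mem_product.1 hxz
  obtain ⟨hx', hz'⟩ := mem_product.1 hxz'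
  have hy₁ : x + z = y₁ := by by_contra h; simp [h] at hpos
  have hy₂ : x' + z' = y₂ := by by_contra h; simp [h] at hpos'
  have hle : x ≤ x' := by linarith [(hZsub z hz).1, (hZsub z' hz').2]
  exact heq.orderValueMass_mul_orderMass_le hν hx hx' hle

end IsKyleEquilibrium

theorem price_monotone_gap_two
    (EV EX EZ : Finset ℝ)
    (ν ζ : ℝ → ℝ)
    (hν : ∀ v ∈ EV, 0 < ν v)
    (hζ : ∀ z ∈ EZ, 0 < ζ z)
    (hZsub : ∀ z ∈ EZ, -1 ≤ z ∧ z ≤ 1)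
    (ξ : ℝ → ℝ → ℝ) (S : ℝ → ℝ)
    (heq : IsKyleEquilibrium EV EX EZ ν ζ ξ S) :
    ∀ y1 y2 : ℝ, 0 < pY EV EX EZ ν ζ ξ y1 → 0 < pY EV EX EZ ν ζ ξ y2 →
      y1 + 2 ≤ y2 → S y1 ≤ S y2 := by
  intro y1 y2 hp1 hp2 hgap
  have hS1 := heq.2.2 y1 hp1
  have hS2 := heq.2.2 y2 hp2
  refine le_of_mul_le_mul_right ?_ (mul_pos hp1 hp2)
  calc S y1 * (pY EV EX EZ ν ζ ξ y1 * pY EV EX EZ ν ζ ξ y2)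
      = pYV EV EX EZ ν ζ ξ y1 * pY EV EX EZ ν ζ ξ y2 := by rw [← hS1]; ring
    _ ≤ pY EV EX EZ ν ζ ξ y1 * pYV EV EX EZ ν ζ ξ y2 :=
      heq.pYV_mul_pY_le (fun v hv => (hν v hv).le) (fun z hz => (hζ z hz).le) hZsub hgap
    _ = S y2 * (pY EV EX EZ ν ζ ξ y1 * pY EV EX EZ ν ζ ξ y2) := by rw [← hS2]; ring
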